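/- arXiv:1003.0594 — 2 statements merged into one kernel-verified Lean document; each statement's English description precedes it below -/
import Mathlib

section
/- Let $B, W$ be finite sets with $|B| = |W| = N \ge 1$, and let $\{W_\alpha\}_{\alpha \in A}$ be a partition of $W$ into nonempty blocks, with $n_\alpha = |W_\alpha|$. Let $\bar f : B \times W \to \mathbb{R}$ be nonnegative with $\sum_{y \in W} \bar f(x,y) = 1$ for all $x \in B$, and suppose $\bar f$ is constant on blocks in the second variable: $\bar f(x,y) = \bar f(x,y')$ whenever $y, y' \in W_\alpha$ for the same $\alpha$. Then $Z(\bar f) = \sum_{\sigma : B \to W \text{ bijection}} \prod_{x} \bar f(x,\sigma(x)) \le \prod_{\alpha \in A} \frac{n_\alpha!}{n_\alpha^{n_\alpha}}$. -/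
/-!
Write `h x α = ∑_{y ∈ W_α} f̄ x y`. Block-constancy gives `h x α = n_α f̄ x y` for every `y ∈ W_α`,
so each term of `Z f̄` equals `∏ₓ h x (π (σ x)) / ∏_α n_α ^ n_α`. Grouping the bijections `σ` by
`τ = π ∘ σ : B → A`, at most `∏_α n_α!` of them share a given `τ`, and
`∑_τ ∏ₓ h x (τ x) = ∏ₓ ∑_α h x α = 1` because the rows of `f̄` are normalized.
-/

open Finset

/-- The partition function: sum over bijections `σ : B ≃ W` of the product of weights. -/
noncomputable def Z {B W : Type*} [Fintype B] [Fintype W] [DecidableEq B] [DecidableEq W]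
    (f : B → W → ℝ) : ℝ :=
  ∑ σ : B ≃ W, ∏ x, f x (σ x)

theorem Fintype.card_equiv_le_factorial {α β : Type*} [Fintype α] [Fintype β]
    [DecidableEq α] [DecidableEq β] : Fintype.card (α ≃ β) ≤ (Fintype.card β).factorial := by
  rcases isEmpty_or_nonempty (α ≃ β) with _ | ⟨⟨e⟩⟩
  · simp
  · rw [Fintype.card_equiv e, Fintype.card_congr e]

section Blocks

variable {B W A : Type*} [Fintype B] [Fintype W] [Fintype A] [DecidableEq A]

theorem card_filter_equiv_comp_eq_le [DecidableEq B] [DecidableEq W] (π : W → A) (τ : B → A) :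
    #{σ : B ≃ W | π ∘ ⇑σ = τ} ≤ ∏ α, (#{y | π y = α}).factorial := by
  let restrict (σ : {σ : B ≃ W // π ∘ ⇑σ = τ}) (α : A) : {x // τ x = α} ≃ {y // π y = α} :=
    σ.1.subtypeEquiv fun x => by rw [← congrFun σ.2 x, Function.comp_apply]
  have restrict_injective : Function.Injective restrict := by
    rintro ⟨σ₁, _⟩ ⟨σ₂, _⟩ h
    refine Subtype.ext <| Equiv.ext fun x => ?_
    simpa [restrict] using congrArg (fun e => (e ⟨x, rfl⟩).1) (congrFun h (τ x))
  calc #{σ : B ≃ W | π ∘ ⇑σ = τ}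
      = Fintype.card {σ : B ≃ W // π ∘ ⇑σ = τ} := (Fintype.card_subtype _).symm
    _ ≤ Fintype.card (∀ α, {x // τ x = α} ≃ {y // π y = α}) :=
      Fintype.card_le_of_injective _ restrict_injective
    _ ≤ ∏ α, (#{y | π y = α}).factorial := by
      rw [Fintype.card_pi]
      refine prod_le_prod' fun α _ => ?_
      rw [← Fintype.card_subtype]
      exact Fintype.card_equiv_le_factorial

variable {R : Type*} [CommSemiring R]

theorem sum_equiv_prod_comp_le [DecidableEq B] [DecidableEq W] [PartialOrder R]
    [IsOrderedRing R] (π : W → A) {h : B → A → R} (hh : ∀ x α, 0 ≤ h x α) :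
    ∑ σ : B ≃ W, ∏ x, h x (π (σ x)) ≤
      (∏ α, ((#{y | π y = α}).factorial : R)) * ∏ x, ∑ α, h x α := by
  rw [Fintype.prod_sum, mul_sum, ← sum_fiberwise univ (fun σ : B ≃ W => π ∘ ⇑σ)]
  refine sum_le_sum fun τ _ => ?_
  have term_eq (σ) (hσ : σ ∈ ({σ : B ≃ W | π ∘ ⇑σ = τ} : Finset _)) :
      ∏ x, h x (π (σ x)) = ∏ x, h x (τ x) := by
    rw [← (mem_filter.1 hσ).2]
    rfl
  rw [sum_congr rfl term_eq, sum_const, nsmul_eq_mul]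
  refine mul_le_mul_of_nonneg_right ?_ (prod_nonneg fun x _ => hh x (τ x))
  simpa only [Nat.cast_prod] using Nat.mono_cast (α := R) (card_filter_equiv_comp_eq_le π τ)

theorem prod_sum_fiber_comp_equiv (π : W → A) {f : B → W → R}
    (hf : ∀ x y y', π y = π y' → f x y = f x y') (σ : B ≃ W) :
    ∏ x, ∑ y with π y = π (σ x), f x y =
      (∏ α, (#{y | π y = α} : R) ^ #{y | π y = α}) * ∏ x, f x (σ x) := by
  have sum_fiber (x : B) (y : W) :
      ∑ y' with π y' = π y, f x y' = #{y' | π y' = π y} * f x y := by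
    rw [← nsmul_eq_mul, ← sum_const]
    exact sum_congr rfl fun y' hy' => hf x y' y (mem_filter.1 hy').2
  simp_rw [sum_fiber, prod_mul_distrib, ← prod_const, prod_fiberwise']
  congr 1
  exact Equiv.prod_comp σ fun y => (#{y' | π y' = π y} : R)

end Blocks

theorem Z_block_bound_general {B W A : Type*} [Fintype B] [Fintype W] [Fintype A]
    [DecidableEq B] [DecidableEq W] [DecidableEq A]
    (π : W → A)
    (n : A → ℕ) (hn : ∀ α, n α = (univ.filter fun y => π y = α).card)
    (fbar : B → W → ℝ) (hf : ∀ x y, 0 ≤ fbar x y)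
    (hrow : ∀ x, ∑ y, fbar x y = 1)
    (hconst : ∀ x y y', π y = π y' → fbar x y = fbar x y') :
    Z fbar ≤ ∏ α, ((n α).factorial : ℝ) / ((n α : ℝ)) ^ (n α) := by
  obtain rfl : n = fun α => #{y | π y = α} := funext hn
  have block_sum_total (x : B) : ∑ α, ∑ y with π y = α, fbar x y = 1 := by
    rw [sum_fiberwise, hrow]
  have D_pos : 0 < ∏ α, (#{y | π y = α} : ℝ) ^ #{y | π y = α} :=
    prod_pos fun α _ => by exact_mod_cast Nat.pow_self_pos
  rw [prod_div_distrib, le_div_iff₀ D_pos]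
  calc Z fbar * ∏ α, (#{y | π y = α} : ℝ) ^ #{y | π y = α}
      = ∑ σ : B ≃ W, ∏ x, ∑ y with π y = π (σ x), fbar x y := by
        rw [Z, sum_mul]
        refine sum_congr rfl fun σ _ => ?_
        rw [prod_sum_fiber_comp_equiv π hconst, mul_comm]
    _ ≤ (∏ α, ((#{y | π y = α}).factorial : ℝ)) * ∏ x, ∑ α, ∑ y with π y = α, fbar x y :=
        sum_equiv_prod_comp_le π (h := fun x α => ∑ y with π y = α, fbar x y)
          fun x α => sum_nonneg fun y _ => hf x y
    _ = ∏ α, ((#{y | π y = α}).factorial : ℝ) := by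
        simp_rw [block_sum_total, prod_const_one, mul_one]

/-- Hilfsatz 2: if `f̄` is nonnegative, row-normalized, and constant on the blocks of a
partition of `W` (given by fibers of a surjection `π : W → A`) in the second variable,
then `Z f̄ ≤ ∏ α, n_α!/n_α^{n_α}` where `n_α` is the size of block `α`. -/
theorem Z_block_bound {B W A : Type*} [Fintype B] [Fintype W] [Fintype A]
    [DecidableEq B] [DecidableEq W] [DecidableEq A]
    (N : ℕ) (hN : 1 ≤ N) (hB : Fintype.card B = N) (hW : Fintype.card W = N)
    (π : W → A) (hπ : Function.Surjective π)
    (n : A → ℕ) (hn : ∀ α, n α = (univ.filter fun y => π y = α).card)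
    (fbar : B → W → ℝ) (hf : ∀ x y, 0 ≤ fbar x y)
    (hrow : ∀ x, ∑ y, fbar x y = 1)
    (hconst : ∀ x y y', π y = π y' → fbar x y = fbar x y') :
    Z fbar ≤ ∏ α, ((n α).factorial : ℝ) / ((n α : ℝ)) ^ (n α) :=
  Z_block_bound_general π n hn fbar hf hrow hconst
end

section
/- Let $B, W$ be finite sets with $|B| = |W| = N \ge 1$, and suppose a partition $\{W_\alpha\}_{\alpha \in A}$ of $W$ has all blocks of the same size $\bar n$ (so $\bar n \mid N$). Let $\bar f : B \times W \to [0,\infty)$ be row-normalized ($\sum_y \bar f(x,y) = 1$ for all $x$) and constant on blocks in the second variable. Then $Z(\bar f)^{1/N} \le \left(\frac{\bar n!}{\bar n^{\bar n}}\right)^{1/\bar n}$. -/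
/-! Group the bijections `σ` by their block map `τ = π ∘ σ`. Block-constancy makes the weight of
`σ` a function `∏ₓ g(x, τ x)` of `τ` alone, and at most `∏_α n̄!` bijections share a block map.
Summing over all `τ` factorises as `∏ₓ ∑_α g(x, α)`, and row normalisation gives
`∑_α g(x, α) = 1/n̄`. Hence `Z ≤ n̄!^{N/n̄} n̄^{-N} = (n̄!/n̄^n̄)^{N/n̄}`. -/

open Finset

open Nat

theorem Nat.descFactorial_le_factorial (n k : ℕ) : n.descFactorial k ≤ n ! := by
  rcases le_or_gt k n with h | h
  · rw [← factorial_mul_descFactorial h]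
    exact Nat.le_mul_of_pos_left _ (factorial_pos _)
  · simp [Nat.descFactorial_of_lt h]

theorem Fintype.sum_comp_eq_nsmul_of_card_fiber {W A M : Type*} [Fintype W] [Fintype A]
    [DecidableEq A] [AddCommMonoid M] {π : W → A} {n : ℕ} (hsize : ∀ α, #{y | π y = α} = n)
    (h : A → M) : ∑ y, h (π y) = n • ∑ α, h α := by
  rw [← Finset.sum_fiberwise' univ π h, Finset.smul_sum]
  exact Finset.sum_congr rfl fun α _ => by rw [sum_const, hsize]

section Counting

variable {B W A : Type*} [Fintype B] [Fintype W] [Fintype A]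
  [DecidableEq B] [DecidableEq W] [DecidableEq A]

theorem card_equiv_comp_eq_le_prod_factorial (π : W → A) (τ : B → A) :
    #{σ : B ≃ W | π ∘ σ = τ} ≤ ∏ α, (#{y | π y = α})! := by
  rw [← Fintype.card_subtype]
  let restrict (σ : {σ : B ≃ W // π ∘ σ = τ}) (α : A) : {x // τ x = α} ↪ {y // π y = α} :=
    ⟨fun x => ⟨σ.1 x, (congrFun σ.2 x).trans x.2⟩,
      fun _ _ h => Subtype.ext (σ.1.injective (congrArg Subtype.val h))⟩
  have restrict_injective : Function.Injective restrict := by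
    rintro ⟨σ₁, _⟩ ⟨σ₂, _⟩ h
    ext x
    exact congrArg Subtype.val (DFunLike.congr_fun (congrFun h (τ x)) ⟨x, rfl⟩)
  calc Fintype.card {σ : B ≃ W // π ∘ σ = τ}
      ≤ Fintype.card (∀ α, {x // τ x = α} ↪ {y // π y = α}) :=
        Fintype.card_le_of_injective _ restrict_injective
    _ = ∏ α, (Fintype.card {y // π y = α}).descFactorial (Fintype.card {x // τ x = α}) := by
        simp only [Fintype.card_pi, Fintype.card_embedding_eq]
    _ ≤ ∏ α, (#{y | π y = α})! := by
        gcongr with α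
        rw [Fintype.card_subtype]
        exact Nat.descFactorial_le_factorial _ _

theorem Z_le_prod_factorial_mul_prod_sum (f : B → W → ℝ) (π : W → A) (g : B → A → ℝ)
    (hg : ∀ x α, 0 ≤ g x α) (hfg : ∀ x y, f x y = g x (π y)) :
    Z f ≤ (∏ α, ((#{y | π y = α})! : ℝ)) * ∏ x, ∑ α, g x α := by
  set F : (B → A) → ℝ := fun τ => ∏ x, g x (τ x)
  calc Z f = ∑ σ : B ≃ W, F (π ∘ σ) := by simp only [Z, hfg]; rfl
    _ = ∑ τ, (#{σ : B ≃ W | π ∘ σ = τ} : ℝ) * F τ := by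
        rw [← Finset.sum_fiberwise' univ (fun σ : B ≃ W => π ∘ σ) F]
        simp only [sum_const, nsmul_eq_mul]
    _ ≤ ∑ τ, (∏ α, ((#{y | π y = α})! : ℝ)) * F τ := by
        gcongr with τ
        · exact prod_nonneg fun x _ => hg x (τ x)
        · exact_mod_cast card_equiv_comp_eq_le_prod_factorial π τ
    _ = (∏ α, ((#{y | π y = α})! : ℝ)) * ∏ x, ∑ α, g x α := by
        rw [← mul_sum, Fintype.prod_sum]

end Counting

theorem Real.rpow_one_div_mul_le_of_le_pow {z c : ℝ} {a n : ℕ} (hz : 0 ≤ z) (hc : 0 ≤ c)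
    (ha : a ≠ 0) (hzc : z ≤ c ^ a) : z ^ (1 / (a * n : ℝ)) ≤ c ^ (1 / n : ℝ) :=
  calc z ^ (1 / (a * n : ℝ)) ≤ (c ^ a) ^ (1 / (a * n : ℝ)) := by gcongr
    _ = c ^ (1 / n : ℝ) := by
        rw [← Real.rpow_natCast, ← Real.rpow_mul hc]
        congr 1
        field_simp

theorem Z_root_paradigm_general {B W A : Type*} [Fintype B] [Fintype W] [Fintype A]
    [DecidableEq B] [DecidableEq W] [DecidableEq A]
    (N nbar : ℕ) (hN : 1 ≤ N)
    (hB : Fintype.card B = N) (hW : Fintype.card W = N)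
    (π : W → A)
    (hsize : ∀ α, (univ.filter fun y => π y = α).card = nbar)
    (fbar : B → W → ℝ) (hf : ∀ x y, 0 ≤ fbar x y)
    (hrow : ∀ x, ∑ y, fbar x y = 1)
    (hconst : ∀ x y y', π y = π y' → fbar x y = fbar x y') :
    (Z fbar) ^ ((1 : ℝ) / N)
      ≤ ((nbar.factorial : ℝ) / (nbar : ℝ) ^ nbar) ^ ((1 : ℝ) / nbar) := by
  have hcard : N = Fintype.card A * nbar := by
    simpa [← hW, mul_comm] using Fintype.sum_comp_eq_nsmul_of_card_fiber hsize (fun _ => (1 : ℕ))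
  have hA : Fintype.card A ≠ 0 := by rintro h; simp [h] at hcard; omega
  let g (x : B) : A → ℝ := Function.extend π (fbar x) 0
  have hfg (x y) : fbar x y = g x (π y) :=
    ((show (fbar x).FactorsThrough π from fun _ _ h => hconst x _ _ h).extend_apply 0 y).symm
  have hg (x α) : 0 ≤ g x α := by
    by_cases h : ∃ y, π y = α
    · obtain ⟨y, rfl⟩ := h; exact (hfg x y) ▸ hf x y
    · simp [g, Function.extend_apply' _ _ _ h]
  have hrow_g (x) : ∑ α, g x α = (nbar : ℝ)⁻¹ := by
    refine eq_inv_of_mul_eq_one_right ?_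
    rw [← nsmul_eq_mul, ← Fintype.sum_comp_eq_nsmul_of_card_fiber hsize, ← hrow x]
    simp only [hfg]
  have hZ : Z fbar ≤ ((nbar ! : ℝ) / (nbar : ℝ) ^ nbar) ^ Fintype.card A := by
    refine (Z_le_prod_factorial_mul_prod_sum fbar π g hg hfg).trans_eq ?_
    simp only [hsize, hrow_g, prod_const, Finset.card_univ]
    rw [hB, hcard, div_pow, ← pow_mul, mul_comm nbar, inv_pow, div_eq_mul_inv]
  rw [hcard]
  push_cast
  exact Real.rpow_one_div_mul_le_of_le_pow
    (sum_nonneg fun σ _ => prod_nonneg fun x _ => hf x (σ x)) (by positivity) hA hZ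

/-- Paradigm case: if all blocks of the partition of `W` (fibers of a surjection
`π : W → A`) have the same size `n̄`, and `f̄` is nonnegative, row-normalized and
block-constant in the second variable, then `Z(f̄)^(1/N) ≤ (n̄!/n̄^n̄)^(1/n̄)`. -/
theorem Z_root_paradigm {B W A : Type*} [Fintype B] [Fintype W] [Fintype A]
    [DecidableEq B] [DecidableEq W] [DecidableEq A]
    (N nbar : ℕ) (hN : 1 ≤ N) (hnbar : 1 ≤ nbar)
    (hB : Fintype.card B = N) (hW : Fintype.card W = N)
    (π : W → A) (hπ : Function.Surjective π)
    (hsize : ∀ α, (univ.filter fun y => π y = α).card = nbar)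
    (fbar : B → W → ℝ) (hf : ∀ x y, 0 ≤ fbar x y)
    (hrow : ∀ x, ∑ y, fbar x y = 1)
    (hconst : ∀ x y y', π y = π y' → fbar x y = fbar x y') :
    (Z fbar) ^ ((1 : ℝ) / N)
      ≤ ((nbar.factorial : ℝ) / (nbar : ℝ) ^ nbar) ^ ((1 : ℝ) / nbar) :=
  Z_root_paradigm_general N nbar hN hB hW π hsize fbar hf hrow hconst
end
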